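/- Let p ≥ 1 and Y ⊆ ℝ^p satisfy Assumption A (Y is nonempty, bounded below, and Y↑ is closed). Then for every y ∈ Y, Λ(y) = {λ ∈ Λ : λ·y ≤ λ·y' for all y' ∈ Y_ESN}, and Λ(y) is a convex and compact subset of ℝ^p. -/

import Mathlib

/-!
For strictly positive weights `μ`, the minimizers of `μ ⬝ᵥ ·` over the closed, bounded-below
upper image `Y↑` form a nonempty compact exposed face; an extreme point of it (Krein–Milman) is an
extreme point of `Y↑`, and every such point is an ESN point. Hence every `y' ∈ Y` is beaten for `μ` by
an ESN point. For `λ ∈ Λ` apply this to `μ = λ + ε • 1`; the error is at most `ε * (1 ⬝ᵥ (y' - b))`,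
which vanishes as `ε → 0`.
-/

open Set Pointwise Finset

/-- The set of points of `A` that are nondominated in `A` (componentwise order). -/
def nonDomPts (p : ℕ) (A : Set (Fin p → ℝ)) : Set (Fin p → ℝ) :=
  {y | y ∈ A ∧ ∀ y' ∈ A, y' ≤ y → y' = y}

/-- The upper image `Y↑ = conv Y + ℝ≥0^p`. -/
def upImage (p : ℕ) (Y : Set (Fin p → ℝ)) : Set (Fin p → ℝ) :=
  convexHull ℝ Y + {r : Fin p → ℝ | 0 ≤ r}

/-- Extreme-supported nondominated points of `Y`. -/
def ESN (p : ℕ) (Y : Set (Fin p → ℝ)) : Set (Fin p → ℝ) :=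
  {y | y ∈ nonDomPts p Y ∧ y ∈ Set.extremePoints ℝ (convexHull ℝ Y)}

/-- The weight set component `Λ(y)` of a point `y`. -/
def wsc (p : ℕ) (Y : Set (Fin p → ℝ)) (y : Fin p → ℝ) : Set (Fin p → ℝ) :=
  {l ∈ stdSimplex ℝ (Fin p) | ∀ y' ∈ Y, ∑ i, l i * y i ≤ ∑ i, l i * y' i}

open Filter Topology

section Minimization

variable {ι : Type*} [Fintype ι]

lemma le_add_div_of_dotProduct_le {μ b x : ι → ℝ} {r : ℝ} (hμ : ∀ i, 0 < μ i) (hbx : b ≤ x)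
    (hx : μ ⬝ᵥ x ≤ r) (i : ι) : x i ≤ b i + (r - μ ⬝ᵥ b) / μ i := by
  have hle : μ i * (x - b) i ≤ μ ⬝ᵥ (x - b) :=
    Finset.single_le_sum (f := fun j => μ j * (x - b) j)
      (fun j _ => mul_nonneg (hμ j).le (sub_nonneg.2 (hbx j))) (Finset.mem_univ i)
  rw [dotProduct_sub, Pi.sub_apply] at hle
  rw [← sub_le_iff_le_add', le_div_iff₀ (hμ i)]
  linarith

lemma isCompact_sep_dotProduct_le {A : Set (ι → ℝ)} (hA : IsClosed A) {b : ι → ℝ}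
    (hb : A ⊆ Ici b) {μ : ι → ℝ} (hμ : ∀ i, 0 < μ i) (r : ℝ) :
    IsCompact {x ∈ A | μ ⬝ᵥ x ≤ r} :=
  isCompact_Icc.of_isClosed_subset
    (hA.inter (isClosed_le (continuous_const.dotProduct continuous_id) continuous_const))
    fun _ hx => ⟨hb hx.1, le_add_div_of_dotProduct_le hμ (hb hx.1) hx.2⟩

lemma exists_mem_extremePoints_dotProduct_le {A : Set (ι → ℝ)} (hA : IsClosed A) {b : ι → ℝ}
    (hb : A ⊆ Ici b) {μ : ι → ℝ} (hμ : ∀ i, 0 < μ i) {z : ι → ℝ} (hz : z ∈ A) :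
    ∃ e ∈ A.extremePoints ℝ, μ ⬝ᵥ e ≤ μ ⬝ᵥ z := by
  set S := {x ∈ A | μ ⬝ᵥ x ≤ μ ⬝ᵥ z}
  have hS : IsCompact S := isCompact_sep_dotProduct_le hA hb hμ _
  obtain ⟨x₀, hx₀S, hx₀min⟩ :=
    hS.exists_isMinOn ⟨z, hz, le_rfl⟩ (continuous_const.dotProduct continuous_id).continuousOn
  set l : StrongDual ℝ (ι → ℝ) := -LinearMap.toContinuousLinearMap (dotProductBilin ℝ ℝ μ)
  have hF : IsExposed ℝ A (l.toExposed A) := ContinuousLinearMap.toExposed.isExposed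
  have hx₀F : x₀ ∈ l.toExposed A := by
    refine ⟨hx₀S.1, fun w hw => neg_le_neg ?_⟩
    rcases le_total (μ ⬝ᵥ w) (μ ⬝ᵥ z) with hwz | hzw
    · exact hx₀min ⟨hw, hwz⟩
    · exact hx₀S.2.trans hzw
  have hFS : l.toExposed A ⊆ S := fun x hx => ⟨hx.1, neg_le_neg_iff.1 (hx.2 z hz)⟩
  have hFc : IsCompact (l.toExposed A) := hS.of_isClosed_subset (hF.isClosed hA) hFS
  obtain ⟨e, he⟩ := hFc.extremePoints_nonempty ⟨x₀, hx₀F⟩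
  exact ⟨e, hF.isExtreme.extremePoints_subset_extremePoints he, (hFS he.1).2⟩

end Minimization

section UpperImage

variable {p : ℕ} {Y : Set (Fin p → ℝ)}

lemma convexHull_subset_upImage : convexHull ℝ Y ⊆ upImage p Y := fun x hx =>
  ⟨x, hx, 0, mem_ofPred.2 le_rfl, add_zero x⟩

lemma subset_upImage : Y ⊆ upImage p Y :=
  (subset_convexHull ℝ Y).trans convexHull_subset_upImage

lemma add_mem_upImage {z r : Fin p → ℝ} (hz : z ∈ upImage p Y) (hr : 0 ≤ r) :
    z + r ∈ upImage p Y := by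
  obtain ⟨u, hu, s, hs, rfl⟩ := hz
  exact ⟨u, hu, s + r, add_nonneg hs hr, (add_assoc u s r).symm⟩

lemma upImage_subset_Ici {b : Fin p → ℝ} (hb : ∀ y ∈ Y, b ≤ y) : upImage p Y ⊆ Ici b := by
  rintro _ ⟨u, hu, s, hs, rfl⟩
  exact le_add_of_le_of_nonneg (convexHull_min hb (convex_Ici b) hu) (mem_ofPred.1 hs)

/-- `e` is the midpoint of `u` and `e + r`, both in the upper image. -/
lemma eq_of_add_eq_of_mem_extremePoints_upImage {e u r : Fin p → ℝ}
    (he : e ∈ (upImage p Y).extremePoints ℝ) (hu : u ∈ upImage p Y) (hr : 0 ≤ r)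
    (hur : u + r = e) : u = e :=
  he.2 hu (add_mem_upImage he.1 hr)
    ⟨1 / 2, 1 / 2, by norm_num, by norm_num, by norm_num, by rw [← hur]; module⟩

lemma extremePoints_upImage_subset_ESN : (upImage p Y).extremePoints ℝ ⊆ ESN p Y := by
  intro e he
  have heHull : e ∈ convexHull ℝ Y := by
    obtain ⟨u, hu, s, hs, hus⟩ := he.1
    rwa [← eq_of_add_eq_of_mem_extremePoints_upImage he (convexHull_subset_upImage hu) hs hus]
  have heExt : e ∈ (convexHull ℝ Y).extremePoints ℝ :=
    inter_extremePoints_subset_extremePoints_of_subset convexHull_subset_upImage ⟨heHull, he⟩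
  refine ⟨⟨extremePoints_convexHull_subset heExt, fun y' hy' hle => ?_⟩, heExt⟩
  exact eq_of_add_eq_of_mem_extremePoints_upImage he (subset_upImage hy') (sub_nonneg.2 hle)
    (add_sub_cancel y' e)

variable {b : Fin p → ℝ}

lemma exists_mem_ESN_dotProduct_le (hb : ∀ y ∈ Y, b ≤ y) (hclosed : IsClosed (upImage p Y))
    {μ : Fin p → ℝ} (hμ : ∀ i, 0 < μ i) {y' : Fin p → ℝ} (hy' : y' ∈ Y) :
    ∃ e ∈ ESN p Y, μ ⬝ᵥ e ≤ μ ⬝ᵥ y' := by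
  obtain ⟨e, he, hle⟩ := exists_mem_extremePoints_dotProduct_le hclosed (upImage_subset_Ici hb)
    hμ (subset_upImage hy')
  exact ⟨e, extremePoints_upImage_subset_ESN he, hle⟩

lemma dotProduct_le_of_forall_mem_ESN (hb : ∀ y ∈ Y, b ≤ y) (hclosed : IsClosed (upImage p Y))
    {l y y' : Fin p → ℝ} (hl : 0 ≤ l) (hESN : ∀ e ∈ ESN p Y, l ⬝ᵥ y ≤ l ⬝ᵥ e) (hy' : y' ∈ Y) :
    l ⬝ᵥ y ≤ l ⬝ᵥ y' := by
  have hperturbed : ∀ ε > 0, l ⬝ᵥ y ≤ l ⬝ᵥ y' + ε * (1 ⬝ᵥ (y' - b)) := by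
    intro ε hε
    obtain ⟨e, he, hle⟩ := exists_mem_ESN_dotProduct_le hb hclosed (μ := l + ε • 1)
      (fun i => add_pos_of_nonneg_of_pos (hl i) (by simpa using hε)) hy'
    have hbe : 1 ⬝ᵥ b ≤ 1 ⬝ᵥ e := dotProduct_le_dotProduct_of_nonneg_left (hb e he.1.1) zero_le_one
    simp only [add_dotProduct, smul_dotProduct, smul_eq_mul] at hle
    rw [dotProduct_sub]
    linarith [hESN e he, mul_le_mul_of_nonneg_left hbe hε.le]
  have hlim : Tendsto (fun ε : ℝ => l ⬝ᵥ y' + ε * (1 ⬝ᵥ (y' - b))) (𝓝[>] 0) (𝓝 (l ⬝ᵥ y')) := by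
    simpa using ((tendsto_const_nhds (x := l ⬝ᵥ y')).add
      ((tendsto_id (x := 𝓝 (0 : ℝ))).mul_const (1 ⬝ᵥ (y' - b)))).mono_left nhdsWithin_le_nhds
  exact ge_of_tendsto hlim (eventually_nhdsWithin_of_forall hperturbed)

end UpperImage

section WeightSet

variable {ι : Type*} [Fintype ι]

lemma convex_setOf_dotProduct_le (u v : ι → ℝ) : Convex ℝ {l | l ⬝ᵥ u ≤ l ⬝ᵥ v} := by
  intro l₁ h₁ l₂ h₂ a c ha hc _
  simp only [mem_ofPred_eq, add_dotProduct, smul_dotProduct, smul_eq_mul]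
  exact add_le_add (mul_le_mul_of_nonneg_left h₁ ha) (mul_le_mul_of_nonneg_left h₂ hc)

lemma isClosed_setOf_dotProduct_le (u v : ι → ℝ) : IsClosed {l | l ⬝ᵥ u ≤ l ⬝ᵥ v} :=
  isClosed_le (continuous_id.dotProduct continuous_const) (continuous_id.dotProduct continuous_const)

variable {p : ℕ} {Y : Set (Fin p → ℝ)} {y : Fin p → ℝ}

lemma wsc_eq_inter : wsc p Y y = stdSimplex ℝ (Fin p) ∩ ⋂ y' ∈ Y, {l | l ⬝ᵥ y ≤ l ⬝ᵥ y'} := by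
  ext l
  simp only [wsc, mem_ofPred_eq, mem_inter_iff, mem_iInter, dotProduct]

lemma convex_wsc : Convex ℝ (wsc p Y y) := by
  rw [wsc_eq_inter]
  exact (convex_stdSimplex ℝ _).inter (convex_iInter₂ fun y' _ => convex_setOf_dotProduct_le y y')

lemma isCompact_wsc : IsCompact (wsc p Y y) := by
  rw [wsc_eq_inter]
  exact (isCompact_stdSimplex _ _).inter_right
    (isClosed_biInter fun y' _ => isClosed_setOf_dotProduct_le y y')

end WeightSet

theorem stmt_7_general (p : ℕ) (Y : Set (Fin p → ℝ))
    (b : Fin p → ℝ) (hb : ∀ y ∈ Y, b ≤ y)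
    (hclosed : IsClosed (upImage p Y))
    (y : Fin p → ℝ) :
    wsc p Y y =
      {l ∈ stdSimplex ℝ (Fin p) | ∀ y' ∈ ESN p Y, ∑ i, l i * y i ≤ ∑ i, l i * y' i} ∧
    Convex ℝ (wsc p Y y) ∧ IsCompact (wsc p Y y) := by
  refine ⟨?_, convex_wsc, isCompact_wsc⟩
  ext l
  refine ⟨fun hl => ⟨hl.1, fun e he => hl.2 e he.1.1⟩, fun hl => ⟨hl.1, fun y' hy' => ?_⟩⟩
  exact dotProduct_le_of_forall_mem_ESN hb hclosed hl.1.1 hl.2 hy'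

theorem stmt_7 (p : ℕ) (hp : 1 ≤ p) (Y : Set (Fin p → ℝ))
    (hne : Y.Nonempty) (b : Fin p → ℝ) (hb : ∀ y ∈ Y, b ≤ y)
    (hclosed : IsClosed (upImage p Y))
    (y : Fin p → ℝ) (hy : y ∈ Y) :
    wsc p Y y =
      {l ∈ stdSimplex ℝ (Fin p) | ∀ y' ∈ ESN p Y, ∑ i, l i * y i ≤ ∑ i, l i * y' i} ∧
    Convex ℝ (wsc p Y y) ∧ IsCompact (wsc p Y y) :=
  stmt_7_general p Y b hb hclosed y
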